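/- Let U ∈ SL(d,ℝ) with d = m + n, let R > 0, set P = ((1 + n^{−1}) √d · λ_d(A_R U ℤ^d))^n and Q = P·R. Then for every w ∈ ℝ^d the translated box w + ((0,1]^n × (0, P^{d/(mn)}]^m) contains at least one point of the lattice A_Q U ℤ^d. -/

import Mathlib

open MeasureTheory
open scoped ENNReal

/-- The `L^p` norm of a vector in `ℝ^ι`, for `p ∈ [1,∞]` (junk values otherwise). -/
noncomputable def lpNorm (p : ℝ≥0∞) {ι : Type*} [Fintype ι] (x : ι → ℝ) : ℝ :=
  ‖(WithLp.equiv p (ι → ℝ)).symm x‖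

/-- The Euclidean (`L²`) norm of a vector. -/
noncomputable def euclNorm {ι : Type*} [Fintype ι] (x : ι → ℝ) : ℝ :=
  Real.sqrt (∑ i, x i ^ 2)

/-- `cone(S) = {c • u : u ∈ S, c > 0}`. -/
def cone {m : ℕ} (S : Set (Fin m → ℝ)) : Set (Fin m → ℝ) :=
  {y | ∃ u ∈ S, ∃ c : ℝ, 0 < c ∧ y = c • u}

/-- `S` is an open subset of the unit (Euclidean) sphere of `ℝ^m`. -/
def IsOpenSubsetOfSphere {m : ℕ} (S : Set (Fin m → ℝ)) : Prop :=
  ∃ U : Set (Fin m → ℝ), IsOpen U ∧ S = U ∩ {u | euclNorm u = 1}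

/-- Matrix-vector multiplication, with the matrix given as `Fin m → Fin n → ℝ`. -/
def matVec {m n : ℕ} (B : Fin m → Fin n → ℝ) (x : Fin n → ℝ) : Fin m → ℝ :=
  fun i => ∑ j, B i j * x j

/-- The block matrix `U_B = [[Id_n, 0], [B, Id_m]]`, indexed by `Fin n ⊕ Fin m`. -/
def UB {m n : ℕ} (B : Fin m → Fin n → ℝ) :
    Matrix (Fin n ⊕ Fin m) (Fin n ⊕ Fin m) ℝ :=
  Matrix.fromBlocks 1 0 (Matrix.of B) 1

/-- The diagonal matrix `A_Q = diag(Q^{-1/n} Id_n, Q^{1/m} Id_m)`. -/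
noncomputable def AQ (m n : ℕ) (Q : ℝ) :
    Matrix (Fin n ⊕ Fin m) (Fin n ⊕ Fin m) ℝ :=
  Matrix.diagonal
    (Sum.elim (fun _ : Fin n => Q ^ (-(n : ℝ)⁻¹)) (fun _ : Fin m => Q ^ ((m : ℝ)⁻¹)))

/-- The lattice `Mℤ^d` generated by the columns of `M`. -/
def colLattice {ι : Type*} [Fintype ι] (M : Matrix ι ι ℝ) : Submodule ℤ (ι → ℝ) :=
  Submodule.span ℤ (Set.range fun j => fun i => M i j)

/-- The `i`-th successive minimum of a lattice `L ⊆ ℝ^ι`: the least `r > 0` such that `L`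
contains `i` linearly independent vectors of Euclidean norm at most `r`. -/
noncomputable def succMin {ι : Type*} [Fintype ι] (L : Submodule ℤ (ι → ℝ)) (i : ℕ) : ℝ :=
  sInf {r : ℝ | 0 < r ∧ ∃ v : Fin i → (ι → ℝ), (∀ j, v j ∈ L) ∧
    LinearIndependent ℝ v ∧ ∀ j, euclNorm (v j) ≤ r}

/-! Write `λ = λ_d(A_R U ℤ^d)` and `σ = (1 + 1/n) √d λ`, so that `P = σ^n`. The lattice
`A_R U ℤ^d` contains `d` independent vectors of length `< (1 + 1/n) λ`, and Babai's
nearest-plane rounding (fix the integer coefficient of the last vector by rounding the component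
orthogonal to the span of the others, then recurse on that span) brings every point of `ℝ^d`
within distance `< σ/2` of the lattice. Hence every cube of side `σ` contains a lattice point.
Finally `A_Q U = A_P (A_R U)` with `A_P = diag(σ⁻¹ Id_n, P^{1/m} Id_m)`, which maps cubes of
side `σ` onto boxes `w + (0,1]^n × (0, P^{1/m} σ]^m`, and `P^{1/m} σ = P^{d/(mn)}`. -/

open Submodule
open scoped Matrix

section NearestPlane
variable {E : Type*} [NormedAddCommGroup E] [InnerProductSpace ℝ E]

theorem exists_int_norm_starProjection_orthogonal_sub_zsmul_le (K : Submodule ℝ E)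
    [Kᗮ.HasOrthogonalProjection] {u x : E} (hx : x ∈ K ⊔ ℝ ∙ u) :
    ∃ t : ℤ, ‖Kᗮ.starProjection (x - t • u)‖ ≤ ‖u‖ / 2 := by
  obtain ⟨y, hy, z, hz, rfl⟩ := mem_sup.mp hx
  obtain ⟨a, rfl⟩ := mem_span_singleton.mp hz
  refine ⟨round a, ?_⟩
  have hproj : Kᗮ.starProjection (y + a • u - round a • u) =
      (a - round a) • Kᗮ.starProjection u := by
    rw [map_sub, map_add, K.starProjection_orthogonal_apply_eq_zero hy, map_smul, map_zsmul,
      zero_add, ← Int.cast_smul_eq_zsmul ℝ, sub_smul]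
  calc ‖Kᗮ.starProjection (y + a • u - round a • u)‖
      = |a - round a| * ‖Kᗮ.starProjection u‖ := by rw [hproj, norm_smul, Real.norm_eq_abs]
    _ ≤ 1 / 2 * ‖u‖ :=
      mul_le_mul (abs_sub_round a) (Kᗮ.norm_starProjection_apply_le u) (norm_nonneg _)
        (by norm_num)
    _ = ‖u‖ / 2 := by ring

theorem exists_mem_span_int_norm_sub_sq_le (s : Finset E) :
    ∀ x ∈ span ℝ (s : Set E), ∃ p ∈ span ℤ (s : Set E),
      ‖x - p‖ ^ 2 ≤ (∑ u ∈ s, ‖u‖ ^ 2) / 4 := by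
  classical
  induction s using Finset.induction_on with
  | empty =>
    intro x hx
    rw [Finset.coe_empty, span_empty, mem_bot] at hx
    exact ⟨0, zero_mem _, by simp [hx]⟩
  | insert u s hu ih =>
    intro x hx
    set K := span ℝ (s : Set E)
    have hxK : x ∈ K ⊔ ℝ ∙ u := by rwa [Finset.coe_insert, span_insert, sup_comm] at hx
    obtain ⟨t, ht⟩ := exists_int_norm_starProjection_orthogonal_sub_zsmul_le K hxK
    obtain ⟨q, hq, hxq⟩ := ih (K.starProjection (x - t • u)) (K.starProjection_apply_mem _)
    refine ⟨q + t • u, ?_, ?_⟩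
    · rw [Finset.coe_insert]
      exact add_mem (span_mono (Set.subset_insert _ _) hq)
        (zsmul_mem (subset_span (Set.mem_insert _ _)) t)
    have hqK : q ∈ K := span_le_restrictScalars ℤ ℝ _ hq
    have hsplit : x - (q + t • u) =
        (K.starProjection (x - t • u) - q) + Kᗮ.starProjection (x - t • u) := by
      rw [K.starProjection_orthogonal_val]; abel
    have horth :
        inner ℝ (K.starProjection (x - t • u) - q) (Kᗮ.starProjection (x - t • u)) = 0 :=
      K.inner_right_of_mem_orthogonal (sub_mem (K.starProjection_apply_mem _) hqK)
        (Kᗮ.starProjection_apply_mem _)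
    rw [hsplit, norm_add_sq_real, horth, Finset.sum_insert hu]
    nlinarith [pow_le_pow_left₀ (norm_nonneg _) ht 2]

end NearestPlane

section Lattice
variable {ι : Type*} [Fintype ι]

theorem euclNorm_eq_norm_toLp (x : ι → ℝ) : euclNorm x = ‖WithLp.toLp 2 x‖ := by
  simp [euclNorm, EuclideanSpace.norm_eq]

theorem euclNorm_nonneg (x : ι → ℝ) : 0 ≤ euclNorm x := Real.sqrt_nonneg _

theorem abs_apply_le_euclNorm (x : ι → ℝ) (i : ι) : |x i| ≤ euclNorm x := by
  rw [euclNorm_eq_norm_toLp]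
  exact PiLp.norm_apply_le (WithLp.toLp 2 x) i

theorem norm_le_euclNorm (x : ι → ℝ) : ‖x‖ ≤ euclNorm x :=
  (pi_norm_le_iff_of_nonneg (euclNorm_nonneg x)).mpr fun i => abs_apply_le_euclNorm x i

theorem exists_mem_euclNorm_sub_lt (L : Submodule ℤ (ι → ℝ)) {d : ℕ}
    (hd : Fintype.card ι = d) (hd0 : 0 < d) {v : Fin d → ι → ℝ} (hvL : ∀ j, v j ∈ L)
    (hv : LinearIndependent ℝ v) {r : ℝ} (hr : ∀ j, euclNorm (v j) < r) (x : ι → ℝ) :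
    ∃ p ∈ L, euclNorm (x - p) < √d * r / 2 := by
  classical
  set s : Finset (EuclideanSpace ℝ ι) := Finset.univ.image fun j => WithLp.toLp 2 (v j)
  have hv' : LinearIndependent ℝ fun j => WithLp.toLp 2 (v j) :=
    hv.map' (WithLp.linearEquiv 2 ℝ (ι → ℝ)).symm.toLinearMap (LinearEquiv.ker _)
  have hspan : span ℝ (s : Set (EuclideanSpace ℝ ι)) = ⊤ := by
    have : Nonempty (Fin d) := ⟨⟨0, hd0⟩⟩
    rw [Finset.coe_image, Finset.coe_univ, Set.image_univ]
    exact hv'.span_eq_top_of_card_eq_finrank (by simp [hd])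
  obtain ⟨p, hp, hxp⟩ :=
    exists_mem_span_int_norm_sub_sq_le s (WithLp.toLp 2 x) (hspan ▸ mem_top)
  have hpL : WithLp.ofLp p ∈ L := by
    clear hxp
    induction hp using span_induction with
    | mem u hu =>
      obtain ⟨j, -, rfl⟩ := Finset.mem_image.mp hu
      exact hvL j
    | zero => exact L.zero_mem
    | add _ _ _ _ h₁ h₂ => exact L.add_mem h₁ h₂
    | smul c _ _ h => exact L.smul_mem c h
  refine ⟨WithLp.ofLp p, hpL, ?_⟩
  have hr0 : 0 < r := (euclNorm_nonneg _).trans_lt (hr ⟨0, hd0⟩)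
  have hsum : ∑ u ∈ s, ‖u‖ ^ 2 < d * r ^ 2 := calc
    ∑ u ∈ s, ‖u‖ ^ 2 ≤ ∑ j, ‖WithLp.toLp 2 (v j)‖ ^ 2 :=
      Finset.sum_image_le_of_nonneg fun _ _ => by positivity
    _ < ∑ _j : Fin d, r ^ 2 := by
      refine Finset.sum_lt_sum_of_nonempty ⟨⟨0, hd0⟩, Finset.mem_univ _⟩ fun j _ => ?_
      rw [← euclNorm_eq_norm_toLp]
      exact pow_lt_pow_left₀ (hr j) (euclNorm_nonneg _) two_ne_zero
    _ = d * r ^ 2 := by simp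
  rw [euclNorm_eq_norm_toLp]
  refine lt_of_pow_lt_pow_left₀ 2 (by positivity) ?_
  calc ‖WithLp.toLp 2 (x - WithLp.ofLp p)‖ ^ 2 = ‖WithLp.toLp 2 x - p‖ ^ 2 := rfl
    _ ≤ (∑ u ∈ s, ‖u‖ ^ 2) / 4 := hxp
    _ < (√d * r / 2) ^ 2 := by
      rw [div_pow, mul_pow, Real.sq_sqrt (Nat.cast_nonneg d)]
      linarith

theorem mem_colLattice_iff {M : Matrix ι ι ℝ} {x : ι → ℝ} :
    x ∈ colLattice M ↔ ∃ z : ι → ℤ, M *ᵥ (fun i => (z i : ℝ)) = x := by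
  have hcomb : ∀ z : ι → ℤ, ∑ j, z j • (fun i => M i j) = M *ᵥ fun i => (z i : ℝ) := by
    intro z
    ext i
    simp [Matrix.mulVec, dotProduct, mul_comm]
  simp_rw [colLattice, mem_span_range_iff_exists_fun, hcomb]

theorem exists_pos_le_euclNorm_of_mem_colLattice [DecidableEq ι] {M : Matrix ι ι ℝ}
    (hM : M.det ≠ 0) :
    ∃ c > 0, ∀ x ∈ colLattice M, x ≠ 0 → c ≤ euclNorm x := by
  obtain ⟨K, hK, hanti⟩ :=
    M.mulVecLin.injective_iff_antilipschitz.mp (Matrix.mulVec_injective_of_det_ne_zero hM)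
  refine ⟨K⁻¹, by positivity, ?_⟩
  rintro x hx hx0
  obtain ⟨z, rfl⟩ := mem_colLattice_iff.mp hx
  obtain ⟨i, hi⟩ : ∃ i, z i ≠ 0 := by
    by_contra! h
    simp only [h, Int.cast_zero] at hx0
    exact hx0 M.mulVec_zero
  have hz : (1 : ℝ) ≤ ‖fun i => (z i : ℝ)‖ :=
    le_trans (by rw [Real.norm_eq_abs]; exact_mod_cast Int.one_le_abs hi)
      (norm_le_pi_norm (fun i => (z i : ℝ)) i)
  rw [inv_le_iff_one_le_mul₀ (by exact_mod_cast hK)]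
  calc (1 : ℝ) ≤ ‖fun i => (z i : ℝ)‖ := hz
    _ ≤ K * ‖M *ᵥ fun i => (z i : ℝ)‖ := ZeroHomClass.bound_of_antilipschitz _ hanti _
    _ ≤ K * euclNorm (M *ᵥ fun i => (z i : ℝ)) := by gcongr; exact norm_le_euclNorm _
    _ = euclNorm (M *ᵥ fun i => (z i : ℝ)) * K := mul_comm _ _

theorem exists_linearIndependent_euclNorm_lt_of_succMin_lt [DecidableEq ι] {M : Matrix ι ι ℝ}
    (hM : M.det ≠ 0) {d : ℕ} (hd : Fintype.card ι = d) {r : ℝ} (hr : succMin (colLattice M) d < r) :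
    ∃ v : Fin d → ι → ℝ, (∀ j, v j ∈ colLattice M) ∧ LinearIndependent ℝ v ∧
      ∀ j, euclNorm (v j) < r := by
  set e := (Fintype.equivFinOfCardEq hd).symm
  set cols : Fin d → ι → ℝ := fun j i => M i (e j)
  have hcolsL : ∀ j, cols j ∈ colLattice M := fun j => subset_span ⟨e j, rfl⟩
  have hcols : LinearIndependent ℝ cols :=
    (Matrix.linearIndependent_cols_of_det_ne_zero hM).comp e e.injective
  have hcols_le : ∀ j, euclNorm (cols j) ≤ 1 + ∑ j, euclNorm (cols j) := fun j => by
    linarith [Finset.single_le_sum (fun j _ => euclNorm_nonneg (cols j)) (Finset.mem_univ j)]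
  have hpos : 0 < 1 + ∑ j, euclNorm (cols j) :=
    add_pos_of_pos_of_nonneg one_pos (Finset.sum_nonneg fun j _ => euclNorm_nonneg _)
  have hlt := fun hne => exists_lt_of_csInf_lt hne hr
  obtain ⟨s, ⟨-, v, hvL, hv, hvs⟩, hsr⟩ := hlt ⟨_, hpos, cols, hcolsL, hcols, hcols_le⟩
  exact ⟨v, hvL, hv, fun j => (hvs j).trans_lt hsr⟩

theorem succMin_colLattice_pos [DecidableEq ι] {M : Matrix ι ι ℝ} (hM : M.det ≠ 0) {d : ℕ}
    (hd : Fintype.card ι = d) (hd0 : 0 < d) : 0 < succMin (colLattice M) d := by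
  obtain ⟨c, hc, hcL⟩ := exists_pos_le_euclNorm_of_mem_colLattice hM
  by_contra! hle
  obtain ⟨v, hvL, hv, hvc⟩ :=
    exists_linearIndependent_euclNorm_lt_of_succMin_lt hM hd (hle.trans_lt hc)
  exact (hcL _ (hvL ⟨0, hd0⟩) (hv.ne_zero _)).not_gt (hvc _)

end Lattice

theorem exists_mem_box_of_forall_exists_abs_sub_lt {ι : Type*} [Fintype ι] [DecidableEq ι]
    (M : Matrix ι ι ℝ) {a : ι → ℝ} (ha : ∀ i, 0 < a i) {ρ : ℝ}
    (hcov : ∀ x : ι → ℝ, ∃ p ∈ colLattice M, ∀ i, |x i - p i| < ρ / 2) (w : ι → ℝ) :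
    ∃ ζ : ι → ℤ, ∀ i, w i < (Matrix.diagonal a * M).mulVec (fun j => (ζ j : ℝ)) i ∧
      (Matrix.diagonal a * M).mulVec (fun j => (ζ j : ℝ)) i < w i + a i * ρ := by
  obtain ⟨p, hp, hwp⟩ := hcov fun i => w i / a i + ρ / 2
  obtain ⟨ζ, rfl⟩ := mem_colLattice_iff.mp hp
  refine ⟨ζ, fun i => ?_⟩
  rw [← Matrix.mulVec_mulVec, Matrix.mulVec_diagonal]
  obtain ⟨h₁, h₂⟩ := abs_lt.mp (hwp i)
  have hwa : a i * (w i / a i) = w i := mul_div_cancel₀ _ (ha i).ne'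
  constructor <;> nlinarith [ha i]

theorem AQ_mul (m n : ℕ) {P R : ℝ} (hP : 0 ≤ P) (hR : 0 ≤ R) :
    AQ m n (P * R) = AQ m n P * AQ m n R := by
  rw [AQ, AQ, AQ, Matrix.diagonal_mul_diagonal]
  congr 1
  ext (i | j) <;> simp [Real.mul_rpow hP hR]

theorem AQ_det_pos (m n : ℕ) {R : ℝ} (hR : 0 < R) : 0 < (AQ m n R).det := by
  rw [AQ, Matrix.det_diagonal]
  exact Finset.prod_pos fun i _ => by cases i <;> simp [Real.rpow_pos_of_pos hR]

/-- **Key step of the proof of Theorem 1(a).** Let `U ∈ SL(d,ℝ)`, `R > 0`,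
`P = ((1 + n⁻¹)√d · λ_d(A_R U ℤ^d))^n` and `Q = P·R`.  Then every translated box
`w + ((0,1]^n × (0, P^{d/(mn)}]^m)` contains a point of the lattice `A_Q U ℤ^d`. -/
theorem translated_box_contains_lattice_point (m n : ℕ) (hm : 1 ≤ m) (hn : 1 ≤ n)
    (U : Matrix (Fin n ⊕ Fin m) (Fin n ⊕ Fin m) ℝ) (hU : U.det = 1)
    (R : ℝ) (hR : 0 < R) (P Q : ℝ)
    (hP : P = ((1 + (n : ℝ)⁻¹) * Real.sqrt ((m + n : ℕ) : ℝ)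
        * succMin (colLattice (AQ m n R * U)) (m + n)) ^ n)
    (hQ : Q = P * R) :
    ∀ w : Fin n ⊕ Fin m → ℝ, ∃ ζ : Fin n ⊕ Fin m → ℤ,
      (∀ i : Fin n,
        w (Sum.inl i) < (AQ m n Q * U).mulVec (fun s => (ζ s : ℝ)) (Sum.inl i) ∧
        (AQ m n Q * U).mulVec (fun s => (ζ s : ℝ)) (Sum.inl i) ≤ w (Sum.inl i) + 1) ∧
      (∀ j : Fin m,
        w (Sum.inr j) < (AQ m n Q * U).mulVec (fun s => (ζ s : ℝ)) (Sum.inr j) ∧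
        (AQ m n Q * U).mulVec (fun s => (ζ s : ℝ)) (Sum.inr j)
          ≤ w (Sum.inr j) + P ^ ((((m + n : ℕ) : ℝ)) / ((m : ℝ) * (n : ℝ)))) := by
  intro w
  set M := AQ m n R * U
  set lam := succMin (colLattice M) (m + n)
  set σ := (1 + (n : ℝ)⁻¹) * √((m + n : ℕ) : ℝ) * lam
  have hM : M.det ≠ 0 := by rw [Matrix.det_mul, hU, mul_one]; exact (AQ_det_pos m n hR).ne'
  have hd : Fintype.card (Fin n ⊕ Fin m) = m + n := by simp [add_comm]
  have hlam : 0 < lam := succMin_colLattice_pos hM hd (by omega)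
  obtain ⟨v, hvL, hv, hvr⟩ := exists_linearIndependent_euclNorm_lt_of_succMin_lt hM hd
    (r := (1 + (n : ℝ)⁻¹) * lam) (lt_mul_left hlam (by simp; omega))
  have hcov : ∀ x : Fin n ⊕ Fin m → ℝ, ∃ p ∈ colLattice M, ∀ i, |x i - p i| < σ / 2 := by
    intro x
    obtain ⟨p, hp, hxp⟩ := exists_mem_euclNorm_sub_lt _ hd (by omega) hvL hv hvr x
    exact ⟨p, hp, fun i => (abs_apply_le_euclNorm _ i).trans_lt (hxp.trans_eq (by ring))⟩
  have hσ : 0 < σ := by positivity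
  set τ := P ^ (m : ℝ)⁻¹
  have hP0 : 0 < P := hP ▸ pow_pos hσ n
  have hPn : P ^ (n : ℝ)⁻¹ = σ := by rw [hP, Real.pow_rpow_inv_natCast hσ.le (by omega)]
  have hPσ : P ^ (-(n : ℝ)⁻¹) = σ⁻¹ := by rw [Real.rpow_neg hP0.le, hPn]
  have hPd : P ^ (((m + n : ℕ) : ℝ) / (m * n)) = τ * σ := by
    have hexp : ((m + n : ℕ) : ℝ) / (m * n) = (m : ℝ)⁻¹ + (n : ℝ)⁻¹ := by
      field_simp; push_cast; ring
    rw [hexp, Real.rpow_add hP0, hPn]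
  have hA : AQ m n Q * U = Matrix.diagonal (Sum.elim (fun _ => σ⁻¹) fun _ => τ) * M := by
    rw [hQ, AQ_mul m n hP0.le hR.le, Matrix.mul_assoc, AQ, hPσ]
  have hτ : 0 < τ := Real.rpow_pos_of_pos hP0 _
  obtain ⟨ζ, hζ⟩ := exists_mem_box_of_forall_exists_abs_sub_lt M
    (a := Sum.elim (fun _ => σ⁻¹) fun _ => τ) (by rintro (i | j) <;> simp [hσ, hτ]) hcov w
  refine ⟨ζ, fun i => ?_, fun j => ?_⟩ <;> rw [hA]
  · obtain ⟨h₁, h₂⟩ := hζ (.inl i)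
    exact ⟨h₁, h₂.le.trans_eq (by simp [hσ.ne'])⟩
  · obtain ⟨h₁, h₂⟩ := hζ (.inr j)
    exact ⟨h₁, h₂.le.trans_eq (by rw [hPd]; rfl)⟩
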